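/- arXiv:1810.08733 — 3 statements merged into one kernel-verified Lean document; each statement's English description precedes it below -/
import Mathlib

section
/- Let Γ ⊆ X be compact and non-recurrent, let Λ ⊆ ℂ, and let G be a set of continuous functions Γ → ℂ whose linear span is dense in C(Γ;ℂ) with respect to the supremum norm. If the linear span of the set of eigenfunctions generated by pairs (λ, g) with λ ∈ Λ and g ∈ C(Γ;ℂ) is dense in C(X_T;ℂ) in the supremum norm, then the linear span of the set of eigenfunctions generated by pairs (λ, g) with λ ∈ Λ and g ∈ G is also dense in C(X_T;ℂ). -/
/-!
By non-recurrence, `(s, x₀) ↦ S s x₀` is injective on `[0, T] × Γ`, so every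
`g : Γ → ℂ` generates an eigenfunction, linearly in `g`, and on `X_T` two eigenfunctions
with the same `λ` differ by at most `e^{|Re λ| T}` times the sup-distance of their
generators. Hence every eigenfunction generated by a continuous `g` is a uniform limit on
`X_T` of combinations of eigenfunctions generated by elements of `G`, and uniform closure
on `X_T` is idempotent.
-/

/-- A set `Γ` is non-recurrent (for the flow `S` on the time horizon `T`) if
no point of `Γ` returns to `Γ` within time `(0, T]`. -/
def nonrecurrent {X : Type*} (S : ℝ → X → X) (T : ℝ) (Γ : Set X) : Prop :=
  ∀ x ∈ Γ, ∀ t : ℝ, 0 < t → t ≤ T → S t x ∉ Γ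

/-- `X_T`: the image of `Γ` under the flow over the time interval `[0, T]`. -/
def flowImage {X : Type*} (S : ℝ → X → X) (T : ℝ) (Γ : Set X) : Set X :=
  {x | ∃ s ∈ Set.Icc (0:ℝ) T, ∃ x₀ ∈ Γ, S s x₀ = x}

/-- `φ` is the eigenfunction generated by `(λ, g)`:
`φ(S(s, x₀)) = e^{λ s} g(x₀)` for all `x₀ ∈ Γ` and `s ∈ [0, T]`. -/
def IsEigOn {X : Type*} (S : ℝ → X → X) (T : ℝ) (Γ : Set X) (lam : ℂ) (g : Γ → ℂ)
    (φ : X → ℂ) : Prop :=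
  ∀ (x₀ : Γ) (s : ℝ), s ∈ Set.Icc (0:ℝ) T →
    φ (S s (x₀ : X)) = Complex.exp (lam * (s : ℂ)) * g x₀

open Submodule

section UniformClosure

variable {X 𝕜 E : Type*} [NormedField 𝕜] [SeminormedAddCommGroup E] [NormedSpace 𝕜 E]

def uniformClosureOn (K : Set X) (V : Submodule 𝕜 (X → E)) : Submodule 𝕜 (X → E) where
  carrier := {f | ∀ ε > 0, ∃ v ∈ V, ∀ x ∈ K, ‖f x - v x‖ < ε}
  zero_mem' ε hε := ⟨0, V.zero_mem, fun x _ => by simpa using hε⟩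
  add_mem' {f g} hf hg ε hε := by
    obtain ⟨v, hv, hfv⟩ := hf (ε / 2) (half_pos hε)
    obtain ⟨w, hw, hgw⟩ := hg (ε / 2) (half_pos hε)
    refine ⟨v + w, V.add_mem hv hw, fun x hx => ?_⟩
    calc ‖(f + g) x - (v + w) x‖ = ‖(f x - v x) + (g x - w x)‖ := by
          simp only [Pi.add_apply]; abel_nf
      _ ≤ ‖f x - v x‖ + ‖g x - w x‖ := norm_add_le _ _
      _ < ε / 2 + ε / 2 := add_lt_add (hfv x hx) (hgw x hx)
      _ = ε := add_halves ε
  smul_mem' c f hf ε hε := by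
    obtain ⟨v, hv, hfv⟩ := hf (ε / (‖c‖ + 1)) (by positivity)
    refine ⟨c • v, V.smul_mem c hv, fun x hx => ?_⟩
    calc ‖(c • f) x - (c • v) x‖ = ‖c‖ * ‖f x - v x‖ := by
          rw [Pi.smul_apply, Pi.smul_apply, ← smul_sub, norm_smul]
      _ ≤ (‖c‖ + 1) * ‖f x - v x‖ := by gcongr; linarith
      _ < (‖c‖ + 1) * (ε / (‖c‖ + 1)) := by gcongr; exact hfv x hx
      _ = ε := by field_simp

theorem uniformClosureOn_le {K : Set X} {V W : Submodule 𝕜 (X → E)}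
    (h : V ≤ uniformClosureOn K W) : uniformClosureOn K V ≤ uniformClosureOn K W := by
  intro f hf ε hε
  obtain ⟨v, hv, hfv⟩ := hf (ε / 2) (half_pos hε)
  obtain ⟨w, hw, hvw⟩ := h hv (ε / 2) (half_pos hε)
  refine ⟨w, hw, fun x hx => ?_⟩
  calc ‖f x - w x‖ ≤ ‖f x - v x‖ + ‖v x - w x‖ :=
        norm_sub_le_norm_sub_add_norm_sub _ _ _
    _ < ε / 2 + ε / 2 := add_lt_add (hfv x hx) (hvw x hx)
    _ = ε := add_halves ε

end UniformClosure

section Flow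

variable {X : Type*} {S : ℝ → X → X} {T : ℝ} {Γ : Set X}

theorem flow_sub_eq_of_flow_eq (hS0 : ∀ x, S 0 x = x)
    (hSadd : ∀ s t : ℝ, ∀ x, S (t + s) x = S t (S s x)) {s s' : ℝ} {x x' : X}
    (h : S s x = S s' x') : S (s - s') x = x' := by
  rw [sub_eq_neg_add, hSadd, h, ← hSadd, neg_add_cancel, hS0]

theorem nonrecurrent.le_of_flow_eq (hS0 : ∀ x, S 0 x = x)
    (hSadd : ∀ s t : ℝ, ∀ x, S (t + s) x = S t (S s x)) (hΓ : nonrecurrent S T Γ)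
    {s s' : ℝ} (hs : s ∈ Set.Icc 0 T) (hs' : s' ∈ Set.Icc 0 T) {x x' : X} (hx : x ∈ Γ)
    (hx' : x' ∈ Γ) (h : S s x = S s' x') : s ≤ s' := by
  by_contra! hlt
  refine hΓ x hx (s - s') (sub_pos.2 hlt) (by linarith [hs.2, hs'.1]) ?_
  rwa [flow_sub_eq_of_flow_eq hS0 hSadd h]

theorem nonrecurrent.injective_flow (hS0 : ∀ x, S 0 x = x)
    (hSadd : ∀ s t : ℝ, ∀ x, S (t + s) x = S t (S s x)) (hΓ : nonrecurrent S T Γ) :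
    Function.Injective fun p : Set.Icc (0 : ℝ) T × Γ => S p.1 p.2 := by
  rintro ⟨⟨s, hs⟩, ⟨x, hx⟩⟩ ⟨⟨s', hs'⟩, ⟨x', hx'⟩⟩ h
  have hss' : s = s' := le_antisymm (hΓ.le_of_flow_eq hS0 hSadd hs hs' hx hx' h)
    (hΓ.le_of_flow_eq hS0 hSadd hs' hs hx' hx h.symm)
  subst hss'
  have hxx' : x = x' := by simpa [hS0] using flow_sub_eq_of_flow_eq hS0 hSadd h
  subst hxx'
  rfl

theorem exists_isEigOn (hS0 : ∀ x, S 0 x = x)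
    (hSadd : ∀ s t : ℝ, ∀ x, S (t + s) x = S t (S s x)) (hΓ : nonrecurrent S T Γ)
    (lam : ℂ) (g : Γ → ℂ) : ∃ φ : X → ℂ, IsEigOn S T Γ lam g φ :=
  ⟨Function.extend (fun p : Set.Icc (0 : ℝ) T × Γ => S p.1 p.2)
      (fun p => Complex.exp (lam * (p.1 : ℝ)) * g p.2) 0,
    fun x₀ s hs => (hΓ.injective_flow hS0 hSadd).extend_apply _ _ (⟨s, hs⟩, x₀)⟩

theorem IsEigOn.add {lam : ℂ} {g g' : Γ → ℂ} {φ φ' : X → ℂ}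
    (h : IsEigOn S T Γ lam g φ) (h' : IsEigOn S T Γ lam g' φ') :
    IsEigOn S T Γ lam (g + g') (φ + φ') := by
  intro x₀ s hs
  simp only [Pi.add_apply, h x₀ s hs, h' x₀ s hs, mul_add]

theorem IsEigOn.smul {lam : ℂ} {g : Γ → ℂ} {φ : X → ℂ} (h : IsEigOn S T Γ lam g φ)
    (c : ℂ) : IsEigOn S T Γ lam (c • g) (c • φ) := by
  intro x₀ s hs
  simp only [Pi.smul_apply, smul_eq_mul, h x₀ s hs]
  ring

theorem norm_cexp_mul_le {lam : ℂ} {s : ℝ} (hs : s ∈ Set.Icc 0 T) :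
    ‖Complex.exp (lam * s)‖ ≤ Real.exp (|lam.re| * T) := by
  rw [Complex.norm_exp, Complex.re_mul_ofReal, Real.exp_le_exp]
  calc lam.re * s ≤ |lam.re| * s := mul_le_mul_of_nonneg_right (le_abs_self _) hs.1
    _ ≤ |lam.re| * T := mul_le_mul_of_nonneg_left hs.2 (abs_nonneg _)

theorem IsEigOn.norm_sub_le {lam : ℂ} {g g' : Γ → ℂ} {φ φ' : X → ℂ}
    (h : IsEigOn S T Γ lam g φ) (h' : IsEigOn S T Γ lam g' φ') (x₀ : Γ) {s : ℝ}
    (hs : s ∈ Set.Icc 0 T) :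
    ‖φ (S s x₀) - φ' (S s x₀)‖ ≤ Real.exp (|lam.re| * T) * ‖g x₀ - g' x₀‖ := by
  rw [h x₀ s hs, h' x₀ s hs, ← mul_sub, norm_mul]
  exact mul_le_mul_of_nonneg_right (norm_cexp_mul_le hs) (norm_nonneg _)

def eigSet (S : ℝ → X → X) (T : ℝ) (Γ : Set X) (Λ : Set ℂ) (G : Set (Γ → ℂ)) :
    Set (X → ℂ) :=
  {φ | ∃ lam ∈ Λ, ∃ g ∈ G, IsEigOn S T Γ lam g φ}

theorem exists_of_mem_span_eigSet {Λ : Set ℂ} {G : Set (Γ → ℂ)} {f : X → ℂ}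
    (hf : f ∈ span ℂ (eigSet S T Γ Λ G)) :
    ∃ (N : ℕ) (lam : Fin N → ℂ) (c : Fin N → ℂ) (gs : Fin N → Γ → ℂ)
      (φ : Fin N → X → ℂ), (∀ i, lam i ∈ Λ) ∧ (∀ i, gs i ∈ G) ∧
      (∀ i, IsEigOn S T Γ (lam i) (gs i) (φ i)) ∧
      ∑ i, c i • φ i = f := by
  obtain ⟨N, c, φ, rfl⟩ := mem_span_set'.1 hf
  choose lam hlam gs hgs hφ using fun i => (φ i).2
  exact ⟨N, lam, c, gs, fun i => φ i, hlam, hgs, hφ, rfl⟩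

theorem exists_isEigOn_mem_span (hS0 : ∀ x, S 0 x = x)
    (hSadd : ∀ s t : ℝ, ∀ x, S (t + s) x = S t (S s x)) (hΓ : nonrecurrent S T Γ)
    {Λ : Set ℂ} {G : Set (Γ → ℂ)} {lam : ℂ} (hlam : lam ∈ Λ) {g : Γ → ℂ}
    (hg : g ∈ span ℂ G) :
    ∃ φ ∈ span ℂ (eigSet S T Γ Λ G), IsEigOn S T Γ lam g φ := by
  induction hg using span_induction with
  | mem g hg =>
    obtain ⟨φ, hφ⟩ := exists_isEigOn hS0 hSadd hΓ lam g
    exact ⟨φ, subset_span ⟨lam, hlam, g, hg, hφ⟩, hφ⟩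
  | zero => exact ⟨0, zero_mem _, fun x₀ s _ => by simp⟩
  | add g g' _ _ hg hg' =>
    obtain ⟨φ, hφ, hgφ⟩ := hg
    obtain ⟨φ', hφ', hgφ'⟩ := hg'
    exact ⟨φ + φ', add_mem hφ hφ', hgφ.add hgφ'⟩
  | smul c g _ hg =>
    obtain ⟨φ, hφ, hgφ⟩ := hg
    exact ⟨c • φ, smul_mem _ c hφ, hgφ.smul c⟩

theorem eigSet_subset_uniformClosureOn (hS0 : ∀ x, S 0 x = x)
    (hSadd : ∀ s t : ℝ, ∀ x, S (t + s) x = S t (S s x)) (hΓ : nonrecurrent S T Γ)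
    {Λ : Set ℂ} {G₁ G₂ : Set (Γ → ℂ)}
    (hG : G₁ ⊆ uniformClosureOn Set.univ (span ℂ G₂)) :
    eigSet S T Γ Λ G₁ ⊆
      uniformClosureOn (flowImage S T Γ) (span ℂ (eigSet S T Γ Λ G₂)) := by
  rintro φ ⟨lam, hlam, g, hg, hφ⟩ ε hε
  set M := Real.exp (|lam.re| * T)
  have hM : 0 < M := Real.exp_pos _
  obtain ⟨v, hv, hgv⟩ := hG hg (ε / M) (div_pos hε hM)
  obtain ⟨ψ, hψ, hvψ⟩ := exists_isEigOn_mem_span hS0 hSadd hΓ hlam hv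
  refine ⟨ψ, hψ, ?_⟩
  rintro _ ⟨s, hs, x₀, hx₀, rfl⟩
  calc ‖φ (S s x₀) - ψ (S s x₀)‖
        ≤ M * ‖g ⟨x₀, hx₀⟩ - v ⟨x₀, hx₀⟩‖ :=
        hφ.norm_sub_le hvψ ⟨x₀, hx₀⟩ hs
    _ < M * (ε / M) := by gcongr; exact hgv _ (Set.mem_univ _)
    _ = ε := mul_div_cancel₀ ε hM.ne'

end Flow

theorem stmt6_general {X : Type*} [MetricSpace X] (S : ℝ → X → X)
    (hS0 : ∀ x, S 0 x = x)
    (hSadd : ∀ s t : ℝ, ∀ x, S (t + s) x = S t (S s x))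
    (T : ℝ) (Γ : Set X)
    (hΓ : nonrecurrent S T Γ)
    (Λ : Set ℂ) (G : Set (Γ → ℂ))
    -- the span of `G` is dense in `C(Γ; ℂ)` in the sup norm
    (hGdense : ∀ f : Γ → ℂ, Continuous f → ∀ ε : ℝ, 0 < ε →
      ∃ (N : ℕ) (c : Fin N → ℂ) (gs : Fin N → Γ → ℂ),
        (∀ i, gs i ∈ G) ∧
        ∀ x : Γ, ‖f x - ∑ i, c i * gs i x‖ < ε)
    -- the span of the eigenfunctions generated by `(λ, g)`, `λ ∈ Λ`, `g ∈ C(Γ; ℂ)`,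
    -- is dense in `C(X_T; ℂ)` in the sup norm
    (hfull : ∀ h : X → ℂ, ContinuousOn h (flowImage S T Γ) → ∀ ε : ℝ, 0 < ε →
      ∃ (N : ℕ) (lam : Fin N → ℂ) (c : Fin N → ℂ) (gs : Fin N → Γ → ℂ)
        (φ : Fin N → X → ℂ),
        (∀ i, lam i ∈ Λ) ∧ (∀ i, Continuous (gs i)) ∧
        (∀ i, IsEigOn S T Γ (lam i) (gs i) (φ i)) ∧
        ∀ x ∈ flowImage S T Γ, ‖h x - ∑ i, c i * φ i x‖ < ε) :
    -- then the span of the eigenfunctions generated by `(λ, g)`, `λ ∈ Λ`, `g ∈ G`,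
    -- is dense in `C(X_T; ℂ)` in the sup norm
    ∀ h : X → ℂ, ContinuousOn h (flowImage S T Γ) → ∀ ε : ℝ, 0 < ε →
      ∃ (N : ℕ) (lam : Fin N → ℂ) (c : Fin N → ℂ) (gs : Fin N → Γ → ℂ)
        (φ : Fin N → X → ℂ),
        (∀ i, lam i ∈ Λ) ∧ (∀ i, gs i ∈ G) ∧
        (∀ i, IsEigOn S T Γ (lam i) (gs i) (φ i)) ∧
        ∀ x ∈ flowImage S T Γ, ‖h x - ∑ i, c i * φ i x‖ < ε := by
  intro h hh ε hε
  have hG : {g : Γ → ℂ | Continuous g} ⊆ uniformClosureOn Set.univ (span ℂ G) := by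
    intro g hg δ hδ
    obtain ⟨N, c, gs, hgs, hgδ⟩ := hGdense g hg δ hδ
    exact ⟨∑ i, c i • gs i, sum_smul_mem _ _ fun i _ => subset_span (hgs i),
      fun x _ => by simpa using hgδ x⟩
  have happrox : h ∈ uniformClosureOn (flowImage S T Γ)
      (span ℂ (eigSet S T Γ Λ {g | Continuous g})) := by
    intro δ hδ
    obtain ⟨N, lam, c, gs, φ, hlam, hgs, hφ, hhδ⟩ := hfull h hh δ hδ
    exact ⟨∑ i, c i • φ i,
      sum_smul_mem _ _ fun i _ => subset_span ⟨lam i, hlam i, gs i, hgs i, hφ i⟩,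
      fun x hx => by simpa using hhδ x hx⟩
  obtain ⟨v, hv, hhv⟩ := uniformClosureOn_le
    (span_le.2 (eigSet_subset_uniformClosureOn hS0 hSadd hΓ hG)) happrox ε hε
  obtain ⟨N, lam, c, gs, φ, hlam, hgs, hφ, rfl⟩ := exists_of_mem_span_eigSet hv
  exact ⟨N, lam, c, gs, φ, hlam, hgs, hφ, fun x hx => by simpa using hhv x hx⟩

theorem stmt6 {X : Type*} [MetricSpace X] (S : ℝ → X → X)
    (hS0 : ∀ x, S 0 x = x)
    (hSadd : ∀ s t : ℝ, ∀ x, S (t + s) x = S t (S s x))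
    (hScont : Continuous fun p : ℝ × X => S p.1 p.2)
    (T : ℝ) (hT : 0 < T) (Γ : Set X)
    (hΓcomp : IsCompact Γ) (hΓ : nonrecurrent S T Γ)
    (Λ : Set ℂ) (G : Set (Γ → ℂ))
    (hGcont : ∀ g ∈ G, Continuous g)
    -- the span of `G` is dense in `C(Γ; ℂ)` in the sup norm
    (hGdense : ∀ f : Γ → ℂ, Continuous f → ∀ ε : ℝ, 0 < ε →
      ∃ (N : ℕ) (c : Fin N → ℂ) (gs : Fin N → Γ → ℂ),
        (∀ i, gs i ∈ G) ∧
        ∀ x : Γ, ‖f x - ∑ i, c i * gs i x‖ < ε)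
    -- the span of the eigenfunctions generated by `(λ, g)`, `λ ∈ Λ`, `g ∈ C(Γ; ℂ)`,
    -- is dense in `C(X_T; ℂ)` in the sup norm
    (hfull : ∀ h : X → ℂ, ContinuousOn h (flowImage S T Γ) → ∀ ε : ℝ, 0 < ε →
      ∃ (N : ℕ) (lam : Fin N → ℂ) (c : Fin N → ℂ) (gs : Fin N → Γ → ℂ)
        (φ : Fin N → X → ℂ),
        (∀ i, lam i ∈ Λ) ∧ (∀ i, Continuous (gs i)) ∧
        (∀ i, IsEigOn S T Γ (lam i) (gs i) (φ i)) ∧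
        ∀ x ∈ flowImage S T Γ, ‖h x - ∑ i, c i * φ i x‖ < ε) :
    -- then the span of the eigenfunctions generated by `(λ, g)`, `λ ∈ Λ`, `g ∈ G`,
    -- is dense in `C(X_T; ℂ)` in the sup norm
    ∀ h : X → ℂ, ContinuousOn h (flowImage S T Γ) → ∀ ε : ℝ, 0 < ε →
      ∃ (N : ℕ) (lam : Fin N → ℂ) (c : Fin N → ℂ) (gs : Fin N → Γ → ℂ)
        (φ : Fin N → X → ℂ),
        (∀ i, lam i ∈ Λ) ∧ (∀ i, gs i ∈ G) ∧
        (∀ i, IsEigOn S T Γ (lam i) (gs i) (φ i)) ∧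
        ∀ x ∈ flowImage S T Γ, ‖h x - ∑ i, c i * φ i x‖ < ε :=
  stmt6_general S hS0 hSadd T Γ hΓ Λ G hGdense hfull
end

section
/- Let Γ ⊆ X be compact and non-recurrent. Then the map P : [0,T] × Γ → X_T defined by P(s, x₀) = S(s, x₀) is a homeomorphism from [0,T] × Γ onto X_T. In particular X_T is compact, and there exist continuous maps τ : X_T → [0,T] and π : X_T → Γ such that S(τ(x), π(x)) = x for every x ∈ X_T, with τ(S(s, x₀)) = s and π(S(s, x₀)) = x₀ for all s ∈ [0,T] and x₀ ∈ Γ. -/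
/-!
If `S s x = S t y` with `x, y ∈ Γ` and `0 ≤ s ≤ t ≤ T`, flowing back by `s` gives
`x = S (t - s) y`, so non-recurrence forces `s = t` and then `x = y`. Hence
`(s, x₀) ↦ S s x₀` is a continuous bijection from the compact space `[0,T] × Γ` onto
the Hausdorff space `X_T`, i.e. a homeomorphism; `τ` and `π` are the two components
of its inverse.
-/

open Set

section Flow

variable {X : Type*} {S : ℝ → X → X} {T : ℝ} {Γ : Set X}

theorem flow_neg_flow (hS0 : ∀ x, S 0 x = x) (hSadd : ∀ s t : ℝ, ∀ x, S (t + s) x = S t (S s x))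
    (s : ℝ) (x : X) : S (-s) (S s x) = x := by
  rw [← hSadd, neg_add_cancel, hS0]

theorem nonrecurrent.eq_of_flow_eq (hS0 : ∀ x, S 0 x = x)
    (hSadd : ∀ s t : ℝ, ∀ x, S (t + s) x = S t (S s x)) (hΓ : nonrecurrent S T Γ)
    {s t : ℝ} (hs : s ∈ Icc 0 T) (ht : t ∈ Icc 0 T) {x y : X} (hx : x ∈ Γ) (hy : y ∈ Γ)
    (hxy : S s x = S t y) : s = t ∧ x = y := by
  have hst : s = t := by
    wlog hle : s ≤ t generalizing s t x y
    · exact (this ht hs hy hx hxy.symm (le_of_not_ge hle)).symm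
    by_contra hne
    have hreturn : S (t - s) y = x := by
      rw [sub_eq_neg_add, hSadd, ← hxy, flow_neg_flow hS0 hSadd]
    exact hΓ y hy (t - s) (sub_pos.2 (lt_of_le_of_ne hle hne)) (by linarith [hs.1, ht.2])
      (hreturn ▸ hx)
  subst hst
  refine ⟨rfl, ?_⟩
  simpa only [flow_neg_flow hS0 hSadd] using congrArg (S (-s)) hxy

theorem flowImage_eq_image2 : flowImage S T Γ = image2 S (Icc 0 T) Γ := rfl

variable [TopologicalSpace X]

theorem isCompact_flowImage (hScont : Continuous fun p : ℝ × X => S p.1 p.2)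
    (hΓcomp : IsCompact Γ) : IsCompact (flowImage S T Γ) := by
  rw [flowImage_eq_image2, ← image_prod]
  exact (isCompact_Icc.prod hΓcomp).image hScont

theorem exists_homeomorph_flowImage [T2Space X] (hS0 : ∀ x, S 0 x = x)
    (hSadd : ∀ s t : ℝ, ∀ x, S (t + s) x = S t (S s x))
    (hScont : Continuous fun p : ℝ × X => S p.1 p.2)
    (hΓcomp : IsCompact Γ) (hΓ : nonrecurrent S T Γ) :
    ∃ H : (Icc (0:ℝ) T × Γ) ≃ₜ flowImage S T Γ,
      ∀ p : Icc (0:ℝ) T × Γ, (H p : X) = S p.1 p.2 := by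
  have : CompactSpace (Icc (0:ℝ) T) := isCompact_iff_compactSpace.mp isCompact_Icc
  have : CompactSpace Γ := isCompact_iff_compactSpace.mp hΓcomp
  let P : Icc (0:ℝ) T × Γ → flowImage S T Γ := fun p => ⟨S p.1 p.2, p.1, p.1.2, p.2, p.2.2, rfl⟩
  have hP_cont : Continuous P := by fun_prop
  have hP_bij : Function.Bijective P := by
    constructor
    · rintro ⟨⟨s, hs⟩, ⟨x, hx⟩⟩ ⟨⟨t, ht⟩, ⟨y, hy⟩⟩ hPst
      obtain ⟨rfl, rfl⟩ := hΓ.eq_of_flow_eq hS0 hSadd hs ht hx hy (congrArg Subtype.val hPst)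
      rfl
    · rintro ⟨_, s, hs, x₀, hx₀, rfl⟩
      exact ⟨(⟨s, hs⟩, ⟨x₀, hx₀⟩), rfl⟩
  exact ⟨hP_cont.homeoOfEquivCompactToT2 (f := Equiv.ofBijective P hP_bij), fun _ => rfl⟩

end Flow

theorem exists_continuousOn_eq_of_continuous {X Y : Type*} [TopologicalSpace X]
    [TopologicalSpace Y] {s : Set X} (d : X → Y) {g : s → Y} (hg : Continuous g) :
    ∃ f : X → Y, ContinuousOn f s ∧ ∀ x (hx : x ∈ s), f x = g ⟨x, hx⟩ := by
  classical
  refine ⟨fun x => if hx : x ∈ s then g ⟨x, hx⟩ else d x, ?_, fun x hx => dif_pos hx⟩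
  rw [continuousOn_iff_continuous_domRestrict]
  convert hg using 1
  funext x
  exact dif_pos x.2

theorem stmt14_general {X : Type*} [MetricSpace X] (S : ℝ → X → X)
    (hS0 : ∀ x, S 0 x = x)
    (hSadd : ∀ s t : ℝ, ∀ x, S (t + s) x = S t (S s x))
    (hScont : Continuous fun p : ℝ × X => S p.1 p.2)
    (T : ℝ) (Γ : Set X)
    (hΓcomp : IsCompact Γ) (hΓ : nonrecurrent S T Γ) :
    -- `P(s, x₀) = S(s, x₀)` is a homeomorphism from `[0,T] × Γ` onto `X_T`
    (∃ H : (Set.Icc (0:ℝ) T × ↥Γ) ≃ₜ ↥(flowImage S T Γ),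
      ∀ p : Set.Icc (0:ℝ) T × ↥Γ, (H p : X) = S (p.1 : ℝ) (p.2 : X)) ∧
    -- in particular `X_T` is compact
    IsCompact (flowImage S T Γ) ∧
    -- and there are continuous `τ : X_T → [0,T]` and `π : X_T → Γ` with
    -- `S(τ(x), π(x)) = x`, `τ(S(s,x₀)) = s`, `π(S(s,x₀)) = x₀`
    ∃ (τ : X → ℝ) (π : X → X),
      ContinuousOn τ (flowImage S T Γ) ∧ ContinuousOn π (flowImage S T Γ) ∧
      (∀ x ∈ flowImage S T Γ, τ x ∈ Set.Icc (0:ℝ) T ∧ π x ∈ Γ ∧ S (τ x) (π x) = x) ∧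
      (∀ s ∈ Set.Icc (0:ℝ) T, ∀ x₀ ∈ Γ, τ (S s x₀) = s ∧ π (S s x₀) = x₀) := by
  obtain ⟨H, hH⟩ := exists_homeomorph_flowImage hS0 hSadd hScont hΓcomp hΓ
  refine ⟨⟨H, hH⟩, isCompact_flowImage hScont hΓcomp, ?_⟩
  obtain ⟨τ, hτ_cont, hτ⟩ := exists_continuousOn_eq_of_continuous (fun _ => 0)
    (g := fun x => ((H.symm x).1 : ℝ)) (by fun_prop)
  obtain ⟨π, hπ_cont, hπ⟩ := exists_continuousOn_eq_of_continuous id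
    (g := fun x => ((H.symm x).2 : X)) (by fun_prop)
  refine ⟨τ, π, hτ_cont, hπ_cont, fun x hx => ?_, fun s hs x₀ hx₀ => ?_⟩
  · rw [hτ x hx, hπ x hx, ← hH, H.apply_symm_apply]
    exact ⟨(H.symm ⟨x, hx⟩).1.2, (H.symm ⟨x, hx⟩).2.2, rfl⟩
  · have hx : S s x₀ ∈ flowImage S T Γ := ⟨s, hs, x₀, hx₀, rfl⟩
    have hH_symm : H.symm ⟨S s x₀, hx⟩ = (⟨s, hs⟩, ⟨x₀, hx₀⟩) :=
      H.symm_apply_eq.2 (Subtype.ext (hH (⟨s, hs⟩, ⟨x₀, hx₀⟩)).symm)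
    rw [hτ _ hx, hπ _ hx, hH_symm]
    exact ⟨rfl, rfl⟩

theorem stmt14 {X : Type*} [MetricSpace X] (S : ℝ → X → X)
    (hS0 : ∀ x, S 0 x = x)
    (hSadd : ∀ s t : ℝ, ∀ x, S (t + s) x = S t (S s x))
    (hScont : Continuous fun p : ℝ × X => S p.1 p.2)
    (T : ℝ) (hT : 0 < T) (Γ : Set X)
    (hΓcomp : IsCompact Γ) (hΓ : nonrecurrent S T Γ) :
    -- `P(s, x₀) = S(s, x₀)` is a homeomorphism from `[0,T] × Γ` onto `X_T`
    (∃ H : (Set.Icc (0:ℝ) T × ↥Γ) ≃ₜ ↥(flowImage S T Γ),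
      ∀ p : Set.Icc (0:ℝ) T × ↥Γ, (H p : X) = S (p.1 : ℝ) (p.2 : X)) ∧
    -- in particular `X_T` is compact
    IsCompact (flowImage S T Γ) ∧
    -- and there are continuous `τ : X_T → [0,T]` and `π : X_T → Γ` with
    -- `S(τ(x), π(x)) = x`, `τ(S(s,x₀)) = s`, `π(S(s,x₀)) = x₀`
    ∃ (τ : X → ℝ) (π : X → X),
      ContinuousOn τ (flowImage S T Γ) ∧ ContinuousOn π (flowImage S T Γ) ∧
      (∀ x ∈ flowImage S T Γ, τ x ∈ Set.Icc (0:ℝ) T ∧ π x ∈ Γ ∧ S (τ x) (π x) = x) ∧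
      (∀ s ∈ Set.Icc (0:ℝ) T, ∀ x₀ ∈ Γ, τ (S s x₀) = s ∧ π (S s x₀) = x₀) :=
  stmt14_general S hS0 hSadd hScont T Γ hΓcomp hΓ
end

section
/- Let Γ ⊆ X be compact and non-recurrent, let λ ∈ ℂ, and let g : Γ → ℂ be continuous. Then the eigenfunction φ : X_T → ℂ generated by (λ, g) is continuous on X_T. -/
/-!
The map `(s, x₀) ↦ S(s, x₀)` from the compact set `[0, T] × Γ` onto `X_T` is continuous, hence
closed, hence a quotient map onto its image. Along this map `φ` pulls back to
`(s, x₀) ↦ e^{λ s} g(x₀)`, which is continuous, so `φ` is continuous on `X_T`.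
-/

open Set Topology

theorem Topology.IsStrictMap.continuousOn_range_iff {C Y Z : Type*} [TopologicalSpace C]
    [TopologicalSpace Y] [TopologicalSpace Z] {F : C → Y} (hF : IsStrictMap F) {φ : Y → Z} :
    ContinuousOn φ (range F) ↔ Continuous (φ ∘ F) := by
  rw [continuousOn_iff_continuous_domRestrict]
  exact hF.continuous_iff

section Flow

variable {X : Type*} (S : ℝ → X → X) (T : ℝ) (Γ : Set X)

def flowParam (p : Icc (0 : ℝ) T × Γ) : X :=
  S p.1 p.2

theorem range_flowParam : range (flowParam S T Γ) = flowImage S T Γ := by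
  ext x
  constructor
  · rintro ⟨⟨⟨s, hs⟩, ⟨x₀, hx₀⟩⟩, rfl⟩
    exact ⟨s, hs, x₀, hx₀, rfl⟩
  · rintro ⟨s, hs, x₀, hx₀, rfl⟩
    exact ⟨(⟨s, hs⟩, ⟨x₀, hx₀⟩), rfl⟩

variable {S T Γ}

theorem isStrictMap_flowParam [TopologicalSpace X] [T2Space X]
    (hScont : Continuous fun p : ℝ × X => S p.1 p.2) (hΓcomp : IsCompact Γ) :
    IsStrictMap (flowParam S T Γ) := by
  have : CompactSpace Γ := isCompact_iff_compactSpace.mp hΓcomp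
  have hcont : Continuous (flowParam S T Γ) :=
    hScont.comp (continuous_subtype_val.prodMap continuous_subtype_val)
  exact hcont.isClosedMap.isStrictMap hcont

theorem IsEigOn.comp_flowParam {lam : ℂ} {g : Γ → ℂ} {φ : X → ℂ} (hφ : IsEigOn S T Γ lam g φ) :
    φ ∘ flowParam S T Γ = fun p => Complex.exp (lam * (p.1 : ℝ)) * g p.2 :=
  funext fun p => hφ p.2 p.1 p.1.2

end Flow

theorem stmt15_general {X : Type*} [MetricSpace X] (S : ℝ → X → X)
    (hScont : Continuous fun p : ℝ × X => S p.1 p.2)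
    (T : ℝ) (Γ : Set X)
    (hΓcomp : IsCompact Γ)
    (lam : ℂ) (g : Γ → ℂ) (hg : Continuous g)
    (φ : X → ℂ) (hφ : IsEigOn S T Γ lam g φ) :
    ContinuousOn φ (flowImage S T Γ) := by
  rw [← range_flowParam, (isStrictMap_flowParam hScont hΓcomp).continuousOn_range_iff,
    hφ.comp_flowParam]
  fun_prop

theorem stmt15 {X : Type*} [MetricSpace X] (S : ℝ → X → X)
    (hS0 : ∀ x, S 0 x = x)
    (hSadd : ∀ s t : ℝ, ∀ x, S (t + s) x = S t (S s x))
    (hScont : Continuous fun p : ℝ × X => S p.1 p.2)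
    (T : ℝ) (hT : 0 < T) (Γ : Set X)
    (hΓ : nonrecurrent S T Γ)
    (hΓcomp : IsCompact Γ)
    (lam : ℂ) (g : Γ → ℂ) (hg : Continuous g)
    (φ : X → ℂ) (hφ : IsEigOn S T Γ lam g φ) :
    ContinuousOn φ (flowImage S T Γ) :=
  stmt15_general S hScont T Γ hΓcomp lam g hg φ hφ
end
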